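/- Let R be a commutative ℚ(q)-algebra and let H(z) = ∑_{n≥0} h_n z^n and E(z) = ∑_{n≥0} (-1)^n e_n z^n be formal power series over R with h_0 = e_0 = 1 and H(z)·E(z) = 1. Then H(qz)·E(q^{-1}z) = 1 + (q - q^{-1})·∑_{n≥1} (-q)^{-n} (∑_{m=0}^n (-q)^m [m] h_m e_{n-m}) z^n, where [m] = (q^m - q^{-m})/(q - q^{-1}). -/

import Mathlib

noncomputable def q : RatFunc ℚ := RatFunc.X

/-- The quantum integer [n] = (q^n - q^{-n})/(q - q^{-1}) in ℚ(q). -/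
noncomputable def qint (n : ℤ) : RatFunc ℚ := (q ^ n - q ^ (-n)) / (q - q⁻¹)

/-!
Write `u = q`, `v = q⁻¹`, so that `u * v = 1`. Then `H(uz) E(vz) = (H(u²z) E(z))(vz)`, and
`H(u²z) E(z) = 1 + (H(u²z) - H(z)) E(z)` because `H E = 1`. The `z^n` coefficient of the
correction term is `q^{-n} ∑_{i+j=n} (q^{2i} - 1) h_i (-1)^j e_j`, and
`q^{-n} (q^{2i} - 1) (-1)^j = (q - q⁻¹) (-q)^{-n} (-q)^i [i]`.
-/

namespace PowerSeries

open Finset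

variable {R : Type*} [CommRing R]

theorem rescale_mul_rescale_of_mul_eq_one {u v : R} (huv : u * v = 1) (F G : R⟦X⟧) :
    rescale u F * rescale v G = rescale v (rescale (u ^ 2) F * G) := by
  rw [map_mul, rescale_rescale, sq, mul_assoc, huv, mul_one]

theorem rescale_mul_rescale_eq_one_add {u v : R} (huv : u * v = 1) {F G : R⟦X⟧}
    (hFG : F * G = 1) :
    rescale u F * rescale v G = 1 + rescale v ((rescale (u ^ 2) F - F) * G) := by
  rw [rescale_mul_rescale_of_mul_eq_one huv, sub_mul, hFG, map_sub, map_one, add_sub_cancel]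

theorem coeff_rescale_sub_rescale_mul (v w : R) (F G : R⟦X⟧) (n : ℕ) :
    coeff n (rescale v ((rescale w F - F) * G)) =
      v ^ n * ∑ p ∈ antidiagonal n, (w ^ p.1 - 1) * (coeff p.1 F * coeff p.2 G) := by
  simp only [coeff_rescale, coeff_mul, map_sub, sub_mul, one_mul, mul_assoc, sum_sub_distrib,
    mul_sub]

end PowerSeries

theorem neg_zpow_mul_pow_mul_sub_zpow_eq {K : Type*} [Field K] {c : K} (hc : c ≠ 0) (i j : ℕ) :
    (-c) ^ (-((i + j : ℕ) : ℤ)) * (-c) ^ i * (c ^ i - c ^ (-(i : ℤ))) =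
      c⁻¹ ^ (i + j) * (c ^ (2 * i) - 1) * (-1) ^ j := by
  have hsplit : (-c) ^ (-((i + j : ℕ) : ℤ)) * (-c) ^ i = (-1) ^ j * c⁻¹ ^ j := by
    rw [← zpow_natCast (-c) i, ← zpow_add₀ (neg_ne_zero.mpr hc),
      show -((i + j : ℕ) : ℤ) + i = -(j : ℤ) by push_cast; ring,
      zpow_neg, zpow_natCast, ← inv_pow, inv_neg, neg_pow]
  have hci : c⁻¹ ^ i * c ^ i = 1 := by rw [← mul_pow, inv_mul_cancel₀ hc, one_pow]
  rw [hsplit, zpow_neg, zpow_natCast, ← inv_pow, pow_add, pow_mul']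
  linear_combination (-(-1) ^ j * c⁻¹ ^ j * c ^ i) * hci

theorem q_ne_zero : q ≠ 0 := RatFunc.X_ne_zero

theorem q_sub_q_inv_ne_zero : q - q⁻¹ ≠ 0 := by
  intro h
  apply RatFunc.transcendental_X (K := ℚ)
  refine ⟨Polynomial.X ^ 2 - 1, Polynomial.X_pow_sub_C_ne_zero two_pos 1, ?_⟩
  have hsq : q ^ 2 = 1 := by
    rw [sq]
    nth_rw 2 [sub_eq_zero.mp h]
    exact mul_inv_cancel₀ q_ne_zero
  simp only [map_sub, map_pow, Polynomial.aeval_X, map_one]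
  exact sub_eq_zero.mpr hsq

theorem q_sub_q_inv_mul_qint (m : ℤ) : (q - q⁻¹) * qint m = q ^ m - q ^ (-m) :=
  mul_div_cancel₀ _ q_sub_q_inv_ne_zero

theorem q_sub_q_inv_mul_neg_zpow_mul_qint (i j : ℕ) :
    (q - q⁻¹) * (-q) ^ (-((i + j : ℕ) : ℤ)) * ((-q) ^ i * qint i) =
      q⁻¹ ^ (i + j) * (q ^ (2 * i) - 1) * (-1) ^ j := by
  calc (q - q⁻¹) * (-q) ^ (-((i + j : ℕ) : ℤ)) * ((-q) ^ i * qint i)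
      = (-q) ^ (-((i + j : ℕ) : ℤ)) * (-q) ^ i * ((q - q⁻¹) * qint i) := by ring
    _ = q⁻¹ ^ (i + j) * (q ^ (2 * i) - 1) * (-1) ^ j := by
      rw [q_sub_q_inv_mul_qint, zpow_natCast, neg_zpow_mul_pow_mul_sub_zpow_eq q_ne_zero]

open PowerSeries Finset in
theorem halves_of_vertex_operators_plus_general {R : Type*} [CommRing R] [Algebra (RatFunc ℚ) R]
    (h e : ℕ → R)
    (H E : PowerSeries R)
    (hH : H = PowerSeries.mk fun n => h n)
    (hE : E = PowerSeries.mk fun n => (-1 : R) ^ n * e n)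
    (hHE : H * E = 1) :
    PowerSeries.rescale (algebraMap (RatFunc ℚ) R q) H *
        PowerSeries.rescale (algebraMap (RatFunc ℚ) R q⁻¹) E =
      1 + PowerSeries.mk (fun n => if n = 0 then 0 else
        algebraMap (RatFunc ℚ) R ((q - q⁻¹) * (-q) ^ (-(n : ℤ))) *
          ∑ m ∈ Finset.range (n + 1),
            algebraMap (RatFunc ℚ) R ((-q) ^ m * qint m) * (h m * e (n - m))) := by
  subst hH hE
  set φ := algebraMap (RatFunc ℚ) R
  have hq : φ q * φ q⁻¹ = 1 := by rw [← map_mul, mul_inv_cancel₀ q_ne_zero, map_one]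
  rw [rescale_mul_rescale_eq_one_add hq hHE]
  congr 1
  ext n
  rw [coeff_rescale_sub_rescale_mul, coeff_mk, Nat.sum_antidiagonal_eq_sum_range_succ_mk]
  split_ifs with hn
  · simp [hn]
  rw [mul_sum, mul_sum]
  refine sum_congr rfl fun i hi => ?_
  obtain ⟨j, rfl⟩ := Nat.exists_eq_add_of_le (mem_range_succ_iff.mp hi)
  have hcoeff := congrArg φ (q_sub_q_inv_mul_neg_zpow_mul_qint i j)
  simp only [coeff_mk, Nat.add_sub_cancel_left, map_mul, map_pow, map_sub, map_neg, map_one]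
    at hcoeff ⊢
  linear_combination -(h i * e j) * hcoeff

open PowerSeries Finset in
theorem halves_of_vertex_operators_plus {R : Type*} [CommRing R] [Algebra (RatFunc ℚ) R]
    (h e : ℕ → R) (h0 : h 0 = 1) (e0 : e 0 = 1)
    (H E : PowerSeries R)
    (hH : H = PowerSeries.mk fun n => h n)
    (hE : E = PowerSeries.mk fun n => (-1 : R) ^ n * e n)
    (hHE : H * E = 1) :
    PowerSeries.rescale (algebraMap (RatFunc ℚ) R q) H *
        PowerSeries.rescale (algebraMap (RatFunc ℚ) R q⁻¹) E =
      1 + PowerSeries.mk (fun n => if n = 0 then 0 else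
        algebraMap (RatFunc ℚ) R ((q - q⁻¹) * (-q) ^ (-(n : ℤ))) *
          ∑ m ∈ Finset.range (n + 1),
            algebraMap (RatFunc ℚ) R ((-q) ^ m * qint m) * (h m * e (n - m))) :=
  halves_of_vertex_operators_plus_general h e H E hH hE hHE
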